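/- Suppose the per-iteration oracle cost is oc(α) = c₀ + c₁/(min{τ, κ·α})² for constants c₀, c₁ ≥ 0, κ > 0, and τ ≥ κ·ᾱ, and that γ > (2q)^{1/2}. Then there exists a constant C > 0, depending only on p and γ, such that for every integer n ≥ 2, E[ TOC(min{T, n}) ] ≤ C · ( c₀·n + (c₁/(κ·ᾱ)²) · n · (log n) · n^{2·log(1/γ)/log(p/q)} ). -/

import Mathlib

/-!
The step size is controlled through the Lyapunov function `G(α) = max 1 (ᾱ/α)²`, which bounds
the cost of one iteration: `c₁ / min(τ, κα)² ≤ c₁/(κᾱ)² · G(α)`. A successful step multiplies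
`G` by at most `γ²` (up to the floor `1`), an unsuccessful one by at most `γ⁻²`, and below `ᾱ`
a step succeeds with conditional probability at least `p`. Hence on `{k < T}`
`E[G(A_{k+1}) | F_k] ≤ ρ·G(A_k) + γ⁻²` with `ρ = q/γ² + p·γ²`, and `ρ < 1` because
`γ² > 2q > q/p`. So `E[G(A_k); k ≤ T]` is bounded uniformly in `k`, and the expected total
cost up to `min(T, n)` is `O(n)`, which the claimed bound dominates.
-/

open MeasureTheory ProbabilityTheory Filter

noncomputable def lyapunov (ᾱ a : ℝ) : ℝ := max 1 ((ᾱ / a) ^ 2)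

section Lyapunov

variable {ᾱ αmax a b c : ℝ}

lemma one_le_lyapunov : 1 ≤ lyapunov ᾱ a := le_max_left _ _

lemma measurable_lyapunov : Measurable (lyapunov ᾱ) := by
  unfold lyapunov; fun_prop

lemma lyapunov_eq_one (hᾱ : 0 ≤ ᾱ) (ha : ᾱ ≤ a) : lyapunov ᾱ a = 1 := by
  rcases hᾱ.eq_or_lt with rfl | hᾱ
  · simp [lyapunov]
  · have ha' := hᾱ.trans_le ha
    exact max_eq_left (pow_le_one₀ (div_nonneg hᾱ.le ha'.le) ((div_le_one ha').2 ha))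

lemma lyapunov_le_of_le (hb : 0 < b) (hba : b ≤ a) : lyapunov ᾱ a ≤ lyapunov ᾱ b := by
  unfold lyapunov
  rw [div_pow, div_pow]
  gcongr

lemma lyapunov_mul_le : lyapunov ᾱ (c * a) ≤ max 1 (lyapunov ᾱ a / c ^ 2) := by
  unfold lyapunov
  rw [show (ᾱ / (c * a)) ^ 2 = (ᾱ / a) ^ 2 / c ^ 2 by field_simp]
  gcongr
  exact le_max_right _ _

lemma lyapunov_min_le (hᾱ : 0 ≤ ᾱ) (hαmax : ᾱ ≤ αmax) :
    lyapunov ᾱ (min αmax a) ≤ lyapunov ᾱ a := by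
  rcases min_choice αmax a with h | h <;> rw [h]
  · exact (lyapunov_eq_one hᾱ hαmax).trans_le one_le_lyapunov

lemma div_sq_min_le_mul_lyapunov {c₁ κ τ : ℝ} (hc₁ : 0 ≤ c₁) (hκ : 0 < κ) (hᾱ : 0 < ᾱ)
    (hτ : κ * ᾱ ≤ τ) (ha : 0 < a) :
    c₁ / (min τ (κ * a)) ^ 2 ≤ c₁ / (κ * ᾱ) ^ 2 * lyapunov ᾱ a := by
  have hG : 1 ≤ lyapunov ᾱ a := one_le_lyapunov
  have hm : 0 < min τ (κ * a) := lt_min ((mul_pos hκ hᾱ).trans_le hτ) (mul_pos hκ ha)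
  rw [div_mul_eq_mul_div, div_le_div_iff₀ (by positivity) (by positivity), mul_assoc]
  gcongr
  rcases min_choice τ (κ * a) with h | h <;> rw [h]
  · calc (κ * ᾱ) ^ 2 = 1 * (κ * ᾱ) ^ 2 := (one_mul _).symm
      _ ≤ lyapunov ᾱ a * τ ^ 2 := by gcongr
  · calc (κ * ᾱ) ^ 2 = (ᾱ / a) ^ 2 * (κ * a) ^ 2 := by field_simp
      _ ≤ lyapunov ᾱ a * (κ * a) ^ 2 := by gcongr; exact le_max_right _ _

end Lyapunov

noncomputable def driftRate (p γ : ℝ) : ℝ := (1 - p) / γ ^ 2 + p * γ ^ 2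

section Scalar

variable {p γ ᾱ αmax : ℝ}

lemma driftRate_nonneg (hp0 : 0 ≤ p) (hp1 : p ≤ 1) : 0 ≤ driftRate p γ := by
  unfold driftRate
  have : 0 ≤ 1 - p := by linarith
  positivity

lemma driftRate_lt_one (hp : 1 / 2 < p) (hγ0 : 0 < γ) (hγ1 : γ < 1)
    (hγq : 2 * (1 - p) < γ ^ 2) : driftRate p γ < 1 := by
  have hγ2 : 0 < γ ^ 2 := by positivity
  have hγ21 : γ ^ 2 < 1 := by nlinarith
  have hpγ : 1 - p < p * γ ^ 2 := by nlinarith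
  rw [driftRate, div_add' _ _ _ hγ2.ne', div_lt_one hγ2]
  nlinarith [mul_pos (sub_pos.2 hγ21) (sub_pos.2 hpγ)]

-- With `g = G(A_k)` and `w` the conditional probability of success, the left-hand side bounds
-- `E[G(A_{k+1}) | F_k]`.
lemma add_sub_mul_le_driftRate_mul_add {g w : ℝ} (hγ0 : 0 < γ) (hγ1 : γ ≤ 1) (hp0 : 0 ≤ p)
    (hp1 : p ≤ 1) (hg : 1 ≤ g) (hw : 0 ≤ w) (hpw : p ≤ w ∨ g = 1) :
    g / γ ^ 2 + (max 1 (γ ^ 2 * g) - g / γ ^ 2) * w ≤ driftRate p γ * g + 1 / γ ^ 2 := by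
  have hγ2 : 0 < γ ^ 2 := by positivity
  have hγ21 : γ ^ 2 ≤ 1 := pow_le_one₀ hγ0.le hγ1
  have hgg : g ≤ g / γ ^ 2 := le_div_self (by linarith) hγ2 hγ21
  have hvu : max 1 (γ ^ 2 * g) ≤ g / γ ^ 2 := max_le (by linarith) (by nlinarith)
  rcases hpw with hpw | rfl
  · calc g / γ ^ 2 + (max 1 (γ ^ 2 * g) - g / γ ^ 2) * w
        ≤ (1 - p) * (g / γ ^ 2) + p * max 1 (γ ^ 2 * g) := by nlinarith
      _ ≤ (1 - p) * (g / γ ^ 2) + p * (1 + γ ^ 2 * g) := by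
          gcongr
          exact max_le (by nlinarith) (by linarith)
      _ = driftRate p γ * g + p := by unfold driftRate; ring
      _ ≤ driftRate p γ * g + 1 / γ ^ 2 := by
          gcongr
          exact hp1.trans (one_le_one_div hγ2 hγ21)
  · have := driftRate_nonneg (γ := γ) hp0 hp1
    nlinarith

lemma mul_pow_le_of_forall_step {a : ℕ → ℝ} (hγ0 : 0 < γ) (hγ1 : γ ≤ 1) (hᾱ : 0 ≤ ᾱ)
    (hαmax : ᾱ ≤ αmax) (h0 : ᾱ ≤ a 0)
    (hstep : ∀ k, a (k + 1) = γ * a k ∨ a (k + 1) = min αmax (γ⁻¹ * a k)) (k : ℕ) :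
    ᾱ * γ ^ k ≤ a k := by
  induction k with
  | zero => simpa using h0
  | succ k ih =>
    have hk : ᾱ * γ ^ (k + 1) ≤ ᾱ * γ ^ k :=
      mul_le_mul_of_nonneg_left (pow_le_pow_of_le_one hγ0.le hγ1 k.le_succ) hᾱ
    have hγk : ᾱ * γ ^ (k + 1) ≤ ᾱ := mul_le_of_le_one_right hᾱ (pow_le_one₀ hγ0.le hγ1)
    rcases hstep k with h | h <;> rw [h]
    · rw [pow_succ, mul_comm γ, ← mul_assoc]
      exact mul_le_mul_of_nonneg_right ih hγ0.le
    · refine le_min (hγk.trans hαmax) (hk.trans (ih.trans ?_))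
      exact le_mul_of_one_le_left ((mul_nonneg hᾱ (by positivity)).trans ih)
        (one_le_inv₀ hγ0 |>.2 hγ1)

lemma le_add_div_of_le_mul_add {u : ℕ → ℝ} {ρ z b : ℝ} (hρ0 : 0 ≤ ρ) (hρ1 : ρ < 1)
    (hz : 0 ≤ z) (hb : 0 ≤ b) (h0 : u 0 ≤ b) (hstep : ∀ k, u (k + 1) ≤ ρ * u k + z) (k : ℕ) :
    u k ≤ b + z / (1 - ρ) := by
  have hρ : 0 < 1 - ρ := by linarith
  induction k with
  | zero => linarith [div_nonneg hz hρ.le]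
  | succ k ih =>
    calc u (k + 1) ≤ ρ * (b + z / (1 - ρ)) + z := by nlinarith [hstep k]
      _ = ρ * b + z / (1 - ρ) := by field_simp; ring
      _ ≤ b + z / (1 - ρ) := by nlinarith

lemma mul_add_le_max_mul {n : ℕ} {c₀ D B e : ℝ} (hn : 2 ≤ n) (hc₀ : 0 ≤ c₀) (hD : 0 ≤ D)
    (he : 0 ≤ e) :
    n * (c₀ + D * B) ≤
      max 1 (B / Real.log 2) * (c₀ * n + D * n * Real.log n * (n : ℝ) ^ e) := by
  set C := max 1 (B / Real.log 2)
  have hlog2 : 0 < Real.log 2 := Real.log_pos one_lt_two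
  have hn2 : (2 : ℝ) ≤ n := by exact_mod_cast hn
  have hC1 : 1 ≤ C := le_max_left _ _
  have hCB : B ≤ C * Real.log 2 := (div_le_iff₀ hlog2).1 (le_max_right _ _)
  have hlogn : Real.log 2 * 1 ≤ Real.log n * (n : ℝ) ^ e :=
    mul_le_mul (Real.log_le_log two_pos hn2) (Real.one_le_rpow (by linarith) he) zero_le_one
      (Real.log_nonneg (by linarith))
  have hDn : 0 ≤ D * n := by positivity
  calc (n : ℝ) * (c₀ + D * B) = c₀ * n + D * n * B := by ring
    _ ≤ C * (c₀ * n) + D * n * (C * Real.log 2) :=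
        add_le_add (le_mul_of_one_le_left (by positivity) hC1)
          (mul_le_mul_of_nonneg_left hCB hDn)
    _ ≤ C * (c₀ * n) + D * n * (C * (Real.log n * (n : ℝ) ^ e)) := by
        gcongr; linarith
    _ = C * (c₀ * n + D * n * Real.log n * (n : ℝ) ^ e) := by ring

end Scalar

section Probability

variable {Ω : Type*} {mΩ : MeasurableSpace Ω} {μ : Measure Ω}

lemma condExp_le_add_mul_condExp_indicator [IsFiniteMeasure μ] {m : MeasurableSpace Ω}
    (hm : m ≤ mΩ) {f u v : Ω → ℝ} {D : Set Ω} (hf : Integrable f μ)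
    (hu : StronglyMeasurable[m] u) (hv : StronglyMeasurable[m] v) (hui : Integrable u μ)
    (hvi : Integrable v μ) (hD : MeasurableSet[mΩ] D) (hfD : ∀ᵐ x ∂μ, x ∈ D → f x ≤ v x)
    (hfDc : ∀ᵐ x ∂μ, x ∉ D → f x ≤ u x) :
    μ[f | m] ≤ᵐ[μ] u + (v - u) * μ[D.indicator (fun _ => (1 : ℝ)) | m] := by
  set ind := D.indicator (fun _ => (1 : ℝ))
  have hind : Integrable ind μ := (integrable_const 1).indicator hD
  have hmul_eq : (v - u) * ind = D.indicator (v - u) := by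
    ext x; by_cases hx : x ∈ D <;> simp [ind, hx]
  have hmul : Integrable ((v - u) * ind) μ := hmul_eq ▸ (hvi.sub hui).indicator hD
  have hle : f ≤ᵐ[μ] u + (v - u) * ind := by
    filter_upwards [hfD, hfDc] with x h1 h2
    by_cases hx : x ∈ D <;> simp [ind, hx, h1, h2]
  refine (condExp_mono hf (hui.add hmul) hle).trans_eq ((condExp_add hui hmul m).trans ?_)
  rw [condExp_of_stronglyMeasurable hm hu hui]
  exact EventuallyEq.rfl.add (condExp_mul_of_stronglyMeasurable_left (hv.sub hu) hmul hind)

lemma integrable_lyapunov_comp [IsFiniteMeasure μ] {ᾱ b : ℝ} {f : Ω → ℝ} (hf : Measurable f)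
    (hb : 0 < b) (hbf : ∀ᵐ x ∂μ, b ≤ f x) : Integrable (fun x => lyapunov ᾱ (f x)) μ := by
  refine (integrable_const (lyapunov ᾱ b)).mono'
    (measurable_lyapunov.comp hf).aestronglyMeasurable ?_
  filter_upwards [hbf] with x hx
  rw [Real.norm_of_nonneg (zero_le_one.trans one_le_lyapunov)]
  exact lyapunov_le_of_le hb hx

lemma integral_sum_Icc_min_eq {f : ℕ → Ω → ℝ} {T : Ω → ℕ}
    (hT : ∀ k, MeasurableSet {x | k ≤ T x}) (hf : ∀ k, Integrable (f k) μ) (n : ℕ) :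
    ∫ x, ∑ k ∈ Finset.Icc 1 (min (T x) n), f k x ∂μ =
      ∑ k ∈ Finset.Icc 1 n, ∫ x in {x | k ≤ T x}, f k x ∂μ := by
  have hsum : ∀ x, ∑ k ∈ Finset.Icc 1 (min (T x) n), f k x =
      ∑ k ∈ Finset.Icc 1 n, {x | k ≤ T x}.indicator (f k) x := by
    intro x
    have hIcc : Finset.Icc 1 (min (T x) n) = {k ∈ Finset.Icc 1 n | k ≤ T x} := by
      ext k; simp only [Finset.mem_filter, Finset.mem_Icc, le_min_iff]; omega
    rw [hIcc, Finset.sum_filter]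
    exact Finset.sum_congr rfl fun k _ => by simp [Set.indicator_apply]
  simp_rw [hsum]
  rw [integral_finsetSum _ (fun k _ => (hf k).indicator (hT k))]
  exact Finset.sum_congr rfl (fun k _ => integral_indicator (hT k))

end Probability

section StepSearch

variable {Ω : Type*} {mΩ : MeasurableSpace Ω} {μ : Measure Ω} {F : Filtration ℕ mΩ}
  {A : ℕ → Ω → ℝ} {T : Ω → ℕ} {p γ ᾱ αmax : ℝ}

lemma condExp_lyapunov_succ_le [IsFiniteMeasure μ] (hp0 : 0 ≤ p) (hp1 : p ≤ 1) (hγ0 : 0 < γ)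
    (hγ1 : γ ≤ 1) (hᾱ : 0 ≤ ᾱ) (hαmax : ᾱ ≤ αmax) (hA : Adapted F A) {k : ℕ}
    (hint : Integrable (fun x => lyapunov ᾱ (A k x)) μ)
    (hint' : Integrable (fun x => lyapunov ᾱ (A (k + 1) x)) μ)
    (hstep : ∀ᵐ x ∂μ, A (k + 1) x = γ * A k x ∨ A (k + 1) x = min αmax (γ⁻¹ * A k x))
    (hprob : ∀ᵐ x ∂μ, (k < T x ∧ A k x ≤ ᾱ) →
      p ≤ (μ[Set.indicator {x' | A (k + 1) x' = min αmax (γ⁻¹ * A k x')}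
              (fun _ => (1 : ℝ)) | F k]) x) :
    ∀ᵐ x ∂μ, k < T x →
      (μ[fun x => lyapunov ᾱ (A (k + 1) x) | F k]) x ≤
        driftRate p γ * lyapunov ᾱ (A k x) + 1 / γ ^ 2 := by
  set D := {x' | A (k + 1) x' = min αmax (γ⁻¹ * A k x')}
  have hAm : ∀ i, Measurable (A i) := fun i => (hA i).mono (F.le i) le_rfl
  have hG : Measurable[F k] (fun x => lyapunov ᾱ (A k x)) := measurable_lyapunov.comp (hA k)
  have hγ2 : 0 < γ ^ 2 := by positivity
  have hD : MeasurableSet D :=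
    measurableSet_eq_fun (hAm _) (measurable_const.min ((hAm k).const_mul _))
  have hup : ∀ᵐ x ∂μ, x ∈ D →
      lyapunov ᾱ (A (k + 1) x) ≤ max 1 (γ ^ 2 * lyapunov ᾱ (A k x)) := by
    refine ae_of_all _ fun x (hx : _ = _) => ?_
    rw [hx]
    refine (lyapunov_min_le hᾱ hαmax).trans (lyapunov_mul_le.trans_eq ?_)
    rw [inv_pow, div_inv_eq_mul, mul_comm]
  have hdown : ∀ᵐ x ∂μ, x ∉ D → lyapunov ᾱ (A (k + 1) x) ≤ lyapunov ᾱ (A k x) / γ ^ 2 := by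
    filter_upwards [hstep] with x hx hxD
    rw [hx.resolve_right hxD]
    refine lyapunov_mul_le.trans_eq (max_eq_right ?_)
    exact one_le_lyapunov.trans (le_div_self (zero_le_one.trans one_le_lyapunov) hγ2
      (pow_le_one₀ hγ0.le hγ1))
  have hcond := condExp_le_add_mul_condExp_indicator (F.le k) hint'
    (hG.div_const _).stronglyMeasurable (measurable_const.max (hG.const_mul _)).stronglyMeasurable
    (hint.div_const _) ((integrable_const 1).sup (hint.const_mul _)) hD hup hdown
  filter_upwards [hcond, condExp_nonneg (m := F k)
    (ae_of_all μ fun x => Set.indicator_nonneg (fun _ _ => zero_le_one' ℝ) x), hprob]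
    with x hx hnonneg hpx hkT
  refine hx.trans (add_sub_mul_le_driftRate_mul_add hγ0 hγ1 hp0 hp1 one_le_lyapunov hnonneg ?_)
  by_cases hAk : A k x ≤ ᾱ
  · exact .inl (hpx ⟨hkT, hAk⟩)
  · exact .inr (lyapunov_eq_one hᾱ (le_of_not_ge hAk))

lemma setIntegral_lyapunov_succ_le [IsProbabilityMeasure μ] (hp0 : 0 ≤ p) (hp1 : p ≤ 1)
    (hγ0 : 0 < γ) (hγ1 : γ ≤ 1) (hᾱ : 0 ≤ ᾱ) (hαmax : ᾱ ≤ αmax) (hA : Adapted F A)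
    (hT : IsStoppingTime F (fun x => (T x : WithTop ℕ))) {k : ℕ}
    (hint : Integrable (fun x => lyapunov ᾱ (A k x)) μ)
    (hint' : Integrable (fun x => lyapunov ᾱ (A (k + 1) x)) μ)
    (hstep : ∀ᵐ x ∂μ, A (k + 1) x = γ * A k x ∨ A (k + 1) x = min αmax (γ⁻¹ * A k x))
    (hprob : ∀ᵐ x ∂μ, (k < T x ∧ A k x ≤ ᾱ) →
      p ≤ (μ[Set.indicator {x' | A (k + 1) x' = min αmax (γ⁻¹ * A k x')}
              (fun _ => (1 : ℝ)) | F k]) x) :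
    ∫ x in {x | k + 1 ≤ T x}, lyapunov ᾱ (A (k + 1) x) ∂μ ≤
      driftRate p γ * ∫ x in {x | k ≤ T x}, lyapunov ᾱ (A k x) ∂μ + 1 / γ ^ 2 := by
  set s := {x | k + 1 ≤ T x}
  have hsF : MeasurableSet[F k] s := by
    simpa [s, Nat.add_one_le_iff] using hT.measurableSet_gt k
  have hs : MeasurableSet s := F.le k _ hsF
  have hρ := driftRate_nonneg (γ := γ) hp0 hp1
  have hG : ∀ i x, 0 ≤ lyapunov ᾱ (A i x) := fun _ _ => zero_le_one.trans one_le_lyapunov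
  have hdrift := condExp_lyapunov_succ_le hp0 hp1 hγ0 hγ1 hᾱ hαmax hA hint hint' hstep hprob
  calc ∫ x in s, lyapunov ᾱ (A (k + 1) x) ∂μ
      = ∫ x in s, (μ[fun x => lyapunov ᾱ (A (k + 1) x) | F k]) x ∂μ :=
        (setIntegral_condExp (F.le k) hint' hsF).symm
    _ ≤ ∫ x in s, (driftRate p γ * lyapunov ᾱ (A k x) + 1 / γ ^ 2) ∂μ := by
        exact setIntegral_mono_ae_restrict integrable_condExp.integrableOn
          ((hint.const_mul _).add (integrable_const _)).integrableOn
          ((ae_restrict_iff' hs).2 hdrift)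
    _ = driftRate p γ * ∫ x in s, lyapunov ᾱ (A k x) ∂μ + μ.real s * (1 / γ ^ 2) := by
        rw [integral_add (hint.const_mul _).integrableOn (integrable_const _),
          integral_const_mul, setIntegral_const, smul_eq_mul]
    _ ≤ driftRate p γ * ∫ x in {x | k ≤ T x}, lyapunov ᾱ (A k x) ∂μ + 1 * (1 / γ ^ 2) := by
        gcongr
        · exact ae_of_all _ (hG k)
        · exact hint.integrableOn
        · exact fun x (hx : k + 1 ≤ T x) => k.le_succ.trans hx
        · exact measureReal_le_one
    _ = _ := by rw [one_mul]

lemma integrable_lyapunov_of_forall_step [IsFiniteMeasure μ] (hγ0 : 0 < γ) (hγ1 : γ ≤ 1)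
    (hᾱ : 0 < ᾱ) (hαmax : ᾱ ≤ αmax) (hA : Adapted F A) (hA0 : ∀ x, ᾱ ≤ A 0 x)
    (hstep : ∀ k, ∀ᵐ x ∂μ, A (k + 1) x = γ * A k x ∨ A (k + 1) x = min αmax (γ⁻¹ * A k x))
    (k : ℕ) : Integrable (fun x => lyapunov ᾱ (A k x)) μ := by
  refine integrable_lyapunov_comp ((hA k).mono (F.le k) le_rfl)
    (by positivity : 0 < ᾱ * γ ^ k) ?_
  filter_upwards [ae_all_iff.2 hstep] with x hx
  exact mul_pow_le_of_forall_step (a := fun i => A i x) hγ0 hγ1 hᾱ.le hαmax (hA0 x) hx k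

lemma setIntegral_lyapunov_le [IsProbabilityMeasure μ] (hp0 : 0 ≤ p) (hp1 : p ≤ 1)
    (hγ0 : 0 < γ) (hγ1 : γ ≤ 1) (hρ : driftRate p γ < 1) (hᾱ : 0 < ᾱ) (hαmax : ᾱ ≤ αmax)
    (hA : Adapted F A)
    (hT : IsStoppingTime F (fun x => (T x : WithTop ℕ))) (hA0 : ∀ x, ᾱ ≤ A 0 x)
    (hstep : ∀ k, ∀ᵐ x ∂μ, A (k + 1) x = γ * A k x ∨ A (k + 1) x = min αmax (γ⁻¹ * A k x))
    (hprob : ∀ k, ∀ᵐ x ∂μ, (k < T x ∧ A k x ≤ ᾱ) →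
      p ≤ (μ[Set.indicator {x' | A (k + 1) x' = min αmax (γ⁻¹ * A k x')}
              (fun _ => (1 : ℝ)) | F k]) x) (k : ℕ) :
    ∫ x in {x | k ≤ T x}, lyapunov ᾱ (A k x) ∂μ ≤ 1 + 1 / γ ^ 2 / (1 - driftRate p γ) := by
  have hint := integrable_lyapunov_of_forall_step hγ0 hγ1 hᾱ hαmax hA hA0 hstep
  refine le_add_div_of_le_mul_add (u := fun k => ∫ x in {x | k ≤ T x}, lyapunov ᾱ (A k x) ∂μ)
    (driftRate_nonneg hp0 hp1) hρ (by positivity) zero_le_one ?_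
    (fun k => setIntegral_lyapunov_succ_le hp0 hp1 hγ0 hγ1 hᾱ.le hαmax hA hT (hint k)
      (hint (k + 1)) (hstep k) (hprob k)) k
  simp [lyapunov_eq_one hᾱ.le (hA0 _)]

theorem integral_sum_oracleCost_le [IsProbabilityMeasure μ] (hp0 : 0 ≤ p) (hp1 : p ≤ 1)
    (hγ0 : 0 < γ) (hγ1 : γ ≤ 1) (hρ : driftRate p γ < 1) (hᾱ : 0 < ᾱ) (hαmax : ᾱ ≤ αmax)
    {c₀ c₁ κ τ : ℝ} (hc₀ : 0 ≤ c₀) (hc₁ : 0 ≤ c₁) (hκ : 0 < κ) (hτ : κ * ᾱ ≤ τ)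
    (hA : Adapted F A) (hApos : ∀ k x, 0 < A k x)
    (hT : IsStoppingTime F (fun x => (T x : WithTop ℕ))) (hA0 : ∀ x, ᾱ ≤ A 0 x)
    (hstep : ∀ k, ∀ᵐ x ∂μ, A (k + 1) x = γ * A k x ∨ A (k + 1) x = min αmax (γ⁻¹ * A k x))
    (hprob : ∀ k, ∀ᵐ x ∂μ, (k < T x ∧ A k x ≤ ᾱ) →
      p ≤ (μ[Set.indicator {x' | A (k + 1) x' = min αmax (γ⁻¹ * A k x')}
              (fun _ => (1 : ℝ)) | F k]) x) (n : ℕ) :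
    ∫ x, ∑ k ∈ Finset.Icc 1 (min (T x) n), (c₀ + c₁ / (min τ (κ * A k x)) ^ 2) ∂μ ≤
      n * (c₀ + c₁ / (κ * ᾱ) ^ 2 * (1 + 1 / γ ^ 2 / (1 - driftRate p γ))) := by
  set B := 1 + 1 / γ ^ 2 / (1 - driftRate p γ)
  set D := c₁ / (κ * ᾱ) ^ 2
  have hAm : ∀ k, Measurable (A k) := fun k => (hA k).mono (F.le k) le_rfl
  have hTm : ∀ k, MeasurableSet {x | k ≤ T x} := fun k =>
    F.le k _ (by simpa using hT.measurableSet_ge k)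
  have hint := integrable_lyapunov_of_forall_step hγ0 hγ1 hᾱ hαmax hA hA0 hstep
  have hcost : ∀ k x, c₀ + c₁ / (min τ (κ * A k x)) ^ 2 ≤ c₀ + D * lyapunov ᾱ (A k x) :=
    fun k x => add_le_add_right (div_sq_min_le_mul_lyapunov hc₁ hκ hᾱ hτ (hApos k x)) c₀
  have hcost_int : ∀ k, Integrable (fun x => c₀ + c₁ / (min τ (κ * A k x)) ^ 2) μ := by
    intro k
    have hmeas : Measurable fun x => c₀ + c₁ / (min τ (κ * A k x)) ^ 2 :=
      (measurable_const.div ((measurable_const.min ((hAm k).const_mul κ)).pow_const 2)).const_add _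
    refine ((integrable_const c₀).add ((hint k).const_mul D)).mono' hmeas.aestronglyMeasurable
      (ae_of_all _ fun x => ?_)
    rw [Real.norm_of_nonneg (by positivity)]
    exact hcost k x
  rw [integral_sum_Icc_min_eq hTm hcost_int]
  calc ∑ k ∈ Finset.Icc 1 n, ∫ x in {x | k ≤ T x}, (c₀ + c₁ / (min τ (κ * A k x)) ^ 2) ∂μ
      ≤ ∑ k ∈ Finset.Icc 1 n, (c₀ + D * B) := Finset.sum_le_sum fun k _ => ?_
    _ = n * (c₀ + D * B) := by
        simp only [Finset.sum_const, Nat.card_Icc, Nat.add_sub_cancel, nsmul_eq_mul]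
  calc ∫ x in {x | k ≤ T x}, (c₀ + c₁ / (min τ (κ * A k x)) ^ 2) ∂μ
      ≤ ∫ x in {x | k ≤ T x}, (c₀ + D * lyapunov ᾱ (A k x)) ∂μ :=
        setIntegral_mono (hcost_int k).integrableOn
          ((integrable_const c₀).add ((hint k).const_mul D)).integrableOn (hcost k)
    _ = μ.real {x | k ≤ T x} * c₀ + D * ∫ x in {x | k ≤ T x}, lyapunov ᾱ (A k x) ∂μ := by
        rw [integral_add (integrable_const c₀) ((hint k).const_mul D).integrableOn,
          setIntegral_const, smul_eq_mul, integral_const_mul]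
    _ ≤ 1 * c₀ + D * B := by
        gcongr
        · exact measureReal_le_one
        · exact setIntegral_lyapunov_le hp0 hp1 hγ0 hγ1 hρ hᾱ hαmax hA hT hA0 hstep hprob k
    _ = c₀ + D * B := by rw [one_mul]

end StepSearch

/-- Expected total sample complexity of SASS: with per-iteration
oracle cost `oc(α) = c₀ + c₁/(min{τ, κ·α})²`, `τ ≥ κ·ᾱ`, and `γ > (2q)^{1/2}`, there is
a constant `C > 0` depending only on `p` and `γ` such that for every admissible process
and every `n ≥ 2`,
`E[TOC(min{T, n})] ≤ C·(c₀·n + (c₁/(κ·ᾱ)²)·n·(log n)·n^{2 log(1/γ)/log(p/q)})`. -/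
theorem stmt_16
    (p γ : ℝ) (hp : 1/2 < p) (hp1 : p < 1) (hγ0 : 0 < γ) (hγ1 : γ < 1)
    (hγq : Real.sqrt (2 * (1 - p)) < γ) :
    ∃ C > 0,
      ∀ (Ω : Type) (mΩ : MeasurableSpace Ω) (μ : Measure Ω),
        IsProbabilityMeasure μ →
      ∀ (F : Filtration ℕ mΩ) (A : ℕ → Ω → ℝ) (T : Ω → ℕ)
        (ᾱ c₀ c₁ κ τ : ℝ) (j j' : ℤ) (αmax : ℝ),
        0 < ᾱ → 0 ≤ c₀ → 0 ≤ c₁ → 0 < κ → κ * ᾱ ≤ τ → j ≤ 0 → j' ≤ 0 →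
        αmax = ᾱ * γ ^ j' →
        Adapted F A → (∀ k x, 0 < A k x) → IsStoppingTime F (fun x => (T x : WithTop ℕ)) →
        (∀ x, A 0 x = ᾱ * γ ^ j) →
        (∀ k, ∀ᵐ x ∂μ,
          A (k+1) x = γ * A k x ∨ A (k+1) x = min αmax (γ⁻¹ * A k x)) →
        (∀ k, ∀ᵐ x ∂μ, (k < T x ∧ A k x ≤ ᾱ) →
          p ≤ (μ[Set.indicator {x' | A (k+1) x' = min αmax (γ⁻¹ * A k x')}
                  (fun _ => (1:ℝ)) | F k]) x) →
        ∀ n : ℕ, 2 ≤ n →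
          ∫ x, (∑ k ∈ Finset.Icc 1 (min (T x) n),
              (c₀ + c₁ / (min τ (κ * A k x))^2)) ∂μ ≤
            C * (c₀ * n
              + c₁ / (κ * ᾱ)^2 * n * Real.log n
                  * (n : ℝ) ^ (2 * Real.log (1/γ) / Real.log (p/(1-p)))) := by
  have hρ := driftRate_lt_one hp hγ0 hγ1 ((Real.sqrt_lt' hγ0).1 hγq)
  refine ⟨max 1 ((1 + 1 / γ ^ 2 / (1 - driftRate p γ)) / Real.log 2),
    zero_lt_one.trans_le (le_max_left _ _), ?_⟩
  intro Ω mΩ μ _ F A T ᾱ c₀ c₁ κ τ j j' αmax hᾱ hc₀ hc₁ hκ hτ hj hj' hαmax hA hApos hT hA0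
    hstep hprob n hn
  have hle_mul_zpow : ∀ i : ℤ, i ≤ 0 → ᾱ ≤ ᾱ * γ ^ i := fun i hi =>
    le_mul_of_one_le_right hᾱ.le (one_le_zpow_of_nonpos₀ hγ0 hγ1.le hi)
  have he : 0 ≤ 2 * Real.log (1 / γ) / Real.log (p / (1 - p)) := by
    have h₁ : 0 ≤ Real.log (1 / γ) := Real.log_nonneg (one_le_one_div hγ0 hγ1.le)
    have h₂ : 0 ≤ Real.log (p / (1 - p)) :=
      Real.log_nonneg ((le_div_iff₀ (by linarith)).2 (by linarith))
    positivity
  exact (integral_sum_oracleCost_le (by linarith) hp1.le hγ0 hγ1.le hρ hᾱ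
    (hαmax ▸ hle_mul_zpow j' hj') hc₀ hc₁ hκ hτ hA hApos hT (fun x => hA0 x ▸ hle_mul_zpow j hj)
    hstep hprob n).trans (mul_add_le_max_mul hn hc₀ (by positivity) he)
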